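/- arXiv:1310.5647 — 4 statements merged into one kernel-verified Lean document; each statement's English description precedes it below -/
import Mathlib

section
/- Let D and D' be two closed disks in the plane with centers o, o' and radii r, r' respectively, with r' ≥ r and o' ∈ D, and suppose D is not contained in D'. Then for any point p on ∂D ∩ ∂D', the angle ∠(o'−o, p−o) is at least π/3. Equivalently, the arc D' ∩ ∂D has angular extent at least 2π/3 and is centered at the direction from o toward o'. -/
open Real

namespace InnerProductGeometry

variable {V : Type*} [NormedAddCommGroup V] [InnerProductSpace ℝ V]

theorem pi_div_three_le_angle_of_two_mul_inner_le {x y : V}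
    (h : 2 * inner ℝ x y ≤ ‖x‖ * ‖y‖) : π / 3 ≤ angle x y := by
  have hcos : inner ℝ x y / (‖x‖ * ‖y‖) ≤ 1 / 2 :=
    div_le_of_le_mul₀ (by positivity) (by norm_num) (by linarith)
  calc π / 3 = arccos (1 / 2) := by
        rw [← cos_pi_div_three, arccos_cos (by positivity) (by linarith [pi_pos])]
    _ ≤ angle x y := arccos_le_arccos hcos

/-- With `‖x‖ = d`, `‖y‖ = r`, `‖x - y‖ = r'`, the cosine of the angle is
`(r² + d² - r'²) / (2 d r) ≤ d / (2 r) ≤ 1 / 2`. -/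
theorem pi_div_three_le_angle_of_norm_le_of_norm_le_norm_sub {x y : V}
    (hxy : ‖x‖ ≤ ‖y‖) (hy : ‖y‖ ≤ ‖x - y‖) : π / 3 ≤ angle x y := by
  apply pi_div_three_le_angle_of_two_mul_inner_le
  have hsub := norm_sub_sq_real x y
  nlinarith [norm_nonneg x]

end InnerProductGeometry

namespace EuclideanGeometry

variable {V P : Type*} [NormedAddCommGroup V] [InnerProductSpace ℝ V] [MetricSpace P]
  [NormedAddTorsor V P]

theorem pi_div_three_le_angle_of_dist_le_of_dist_le {a b c : P}
    (hab : dist b a ≤ dist b c) (hbc : dist b c ≤ dist a c) : π / 3 ≤ ∠ a b c := by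
  apply InnerProductGeometry.pi_div_three_le_angle_of_norm_le_of_norm_le_norm_sub
  · rwa [← dist_eq_norm_vsub', ← dist_eq_norm_vsub']
  · rwa [vsub_sub_vsub_cancel_right, ← dist_eq_norm_vsub', ← dist_eq_norm_vsub]

end EuclideanGeometry

theorem stmt_4_general (o o' p : EuclideanSpace ℝ (Fin 2)) (r r' : ℝ) (hrr : r ≤ r')
    (ho' : o' ∈ Metric.closedBall o r)
    (hp : dist o p = r) (hp' : dist o' p = r') :
    π / 3 ≤ EuclideanGeometry.angle o' o p := by
  have hd : dist o o' ≤ dist o p := by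
    rw [hp, dist_comm]
    exact Metric.mem_closedBall.mp ho'
  exact EuclideanGeometry.pi_div_three_le_angle_of_dist_le_of_dist_le hd (by linarith)

/-- Let `D`, `D'` be closed disks with centers `o`, `o'` and radii `r ≤ r'`, with `o' ∈ D`
and `D ⊄ D'`.  Then for any point `p ∈ ∂D ∩ ∂D'`, the angle at `o` between `o'` and `p`
is at least `π/3` (so the arc `D' ∩ ∂D` has angular extent at least `2π/3`, centered at
the direction from `o` toward `o'`). -/
theorem stmt_4 (o o' p : EuclideanSpace ℝ (Fin 2)) (r r' : ℝ) (hr : 0 < r) (hrr : r ≤ r')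
    (ho' : o' ∈ Metric.closedBall o r)
    (hnot : ¬ Metric.closedBall o r ⊆ Metric.closedBall o' r')
    (hp : dist o p = r) (hp' : dist o' p = r') :
    π / 3 ≤ EuclideanGeometry.angle o' o p :=
  stmt_4_general o o' p r r' hrr ho' hp hp'
end

section
/- Let D be a disk of radius r centered at o, and let γ₁ be a circular arc of ∂D of angular extent π/3 bounding a sector D₁ with apex o. Let D' be a disk with center o' ∉ D₁. Then D' ∩ γ₁ is either empty, or a union of at most two subarcs of γ₁, each containing an endpoint of γ₁; in particular D' ∩ γ₁ never is a nonempty arc contained in the relative interior of γ₁. -/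
/-!
Write `o' = o + s e^{iφ}`. The law of cosines gives `|o + r e^{iθ} - o'|² = r² + s² - 2rs cos(θ - φ)`,
so on the arc the distance to `o'` is a decreasing function of `cos(θ - φ)`. Since `o' ∈ D \ D₁`, no
angle of `γ₁` is congruent to `φ` modulo `2π`, and on an interval free of such angles the cosine
of `θ - φ` is quasiconvex (it decreases, then increases). Hence the distance to `o'` is
quasiconcave on `γ₁`: a point of `γ₁` in `D'` cannot have points outside `D'` on both sides.
-/

open Real

namespace Real

theorem cos_le_max_of_nonneg_of_le_two_pi {a b c : ℝ} (ha : 0 ≤ a) (hab : a ≤ b) (hbc : b ≤ c)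
    (hc : c ≤ 2 * π) : cos b ≤ max (cos a) (cos c) := by
  rcases le_total b π with hb | hb
  · exact le_max_of_le_left (cos_le_cos_of_nonneg_of_le_pi ha hb hab)
  · refine le_max_of_le_right ?_
    rw [← cos_two_pi_sub b, ← cos_two_pi_sub c]
    exact cos_le_cos_of_nonneg_of_le_pi (by linarith) (by linarith) (by linarith)

theorem cos_le_max_of_forall_two_pi_mul_notMem_Ioo {a b c : ℝ} (hab : a ≤ b) (hbc : b ≤ c)
    (h : ∀ k : ℤ, 2 * π * k ∉ Set.Ioo a c) : cos b ≤ max (cos a) (cos c) := by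
  have h2π : 0 < 2 * π := by positivity
  set n := toIcoDiv h2π 0 a
  obtain ⟨ha₀, ha₁⟩ : a - n * (2 * π) ∈ Set.Ico 0 (0 + 2 * π) := by
    simpa only [zsmul_eq_mul] using sub_toIcoDiv_zsmul_mem_Ico h2π 0 a
  have hc : c - n * (2 * π) ≤ 2 * π := by
    by_contra! hc
    exact h (n + 1) ⟨by push_cast; linarith, by push_cast; linarith⟩
  rw [← cos_sub_int_mul_two_pi a n, ← cos_sub_int_mul_two_pi b n, ← cos_sub_int_mul_two_pi c n]
  exact cos_le_max_of_nonneg_of_le_two_pi ha₀ (by linarith) (by linarith) hc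

end Real

theorem dist_add_mul_exp_sq (o : ℂ) (r s θ φ : ℝ) :
    dist (o + r * Complex.exp (θ * Complex.I)) (o + s * Complex.exp (φ * Complex.I)) ^ 2
      = r ^ 2 + s ^ 2 - 2 * r * s * cos (θ - φ) := by
  rw [Complex.dist_eq, Complex.sq_norm, Complex.normSq_apply]
  simp only [add_sub_add_left_eq_sub, Complex.sub_re, Complex.sub_im, Complex.mul_re,
    Complex.mul_im, Complex.ofReal_re, Complex.ofReal_im, Complex.exp_ofReal_mul_I_re,
    Complex.exp_ofReal_mul_I_im, zero_mul, sub_zero, add_zero, cos_sub]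
  nlinarith [sin_sq_add_cos_sq θ, sin_sq_add_cos_sq φ]

theorem dist_add_mul_exp_le_of_cos_le (o : ℂ) {r s θ₁ θ₂ φ : ℝ} (hr : 0 ≤ r) (hs : 0 ≤ s)
    (hcos : cos (θ₂ - φ) ≤ cos (θ₁ - φ)) :
    dist (o + r * Complex.exp (θ₁ * Complex.I)) (o + s * Complex.exp (φ * Complex.I)) ≤
      dist (o + r * Complex.exp (θ₂ * Complex.I)) (o + s * Complex.exp (φ * Complex.I)) := by
  rw [← pow_le_pow_iff_left₀ dist_nonneg dist_nonneg two_ne_zero, dist_add_mul_exp_sq,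
    dist_add_mul_exp_sq]
  nlinarith [mul_nonneg hr hs]

theorem min_dist_le_dist_add_mul_exp (o : ℂ) {r s a b c φ : ℝ} (hr : 0 ≤ r) (hs : 0 ≤ s)
    (hab : a ≤ b) (hbc : b ≤ c) (hφ : ∀ k : ℤ, φ + 2 * π * k ∉ Set.Ioo a c) :
    min (dist (o + r * Complex.exp (a * Complex.I)) (o + s * Complex.exp (φ * Complex.I)))
        (dist (o + r * Complex.exp (c * Complex.I)) (o + s * Complex.exp (φ * Complex.I))) ≤
      dist (o + r * Complex.exp (b * Complex.I)) (o + s * Complex.exp (φ * Complex.I)) := by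
  have hcos : cos (b - φ) ≤ max (cos (a - φ)) (cos (c - φ)) :=
    cos_le_max_of_forall_two_pi_mul_notMem_Ioo (by linarith) (by linarith)
      fun k hk ↦ hφ k ⟨by linarith [hk.1], by linarith [hk.2]⟩
  rcases le_max_iff.mp hcos with ha | hc
  · exact min_le_of_left_le (dist_add_mul_exp_le_of_cos_le o hr hs ha)
  · exact min_le_of_right_le (dist_add_mul_exp_le_of_cos_le o hr hs hc)

theorem stmt_6_general (o o' : ℂ) (r r' α : ℝ)
    (hoD : dist o' o ≤ r)
    (ho' : ¬ ∃ t θ : ℝ, 0 ≤ t ∧ t ≤ r ∧ θ ∈ Set.Icc α (α + π / 3) ∧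
      o' = o + (t : ℂ) * Complex.exp ((θ : ℂ) * Complex.I)) :
    ∀ θ ∈ Set.Icc α (α + π / 3),
      o + (r : ℂ) * Complex.exp ((θ : ℂ) * Complex.I) ∈ Metric.closedBall o' r' →
        (∀ θ' ∈ Set.Icc α θ,
            o + (r : ℂ) * Complex.exp ((θ' : ℂ) * Complex.I) ∈ Metric.closedBall o' r') ∨
          (∀ θ' ∈ Set.Icc θ (α + π / 3),
            o + (r : ℂ) * Complex.exp ((θ' : ℂ) * Complex.I) ∈ Metric.closedBall o' r') := by
  set s := ‖o' - o‖
  set φ := (o' - o).arg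
  have ho'_polar : o' = o + s * Complex.exp (φ * Complex.I) := by
    rw [Complex.norm_mul_exp_arg_mul_I]; ring
  have hs : 0 ≤ s := norm_nonneg _
  have hsr : s ≤ r := by rwa [Complex.dist_eq] at hoD
  have hφ (k : ℤ) : φ + 2 * π * k ∉ Set.Icc α (α + π / 3) := fun hk ↦ ho'
    ⟨s, φ + 2 * π * k, hs, hsr, hk, by
      rw [ho'_polar, Complex.ofReal_add, add_mul, Complex.exp_add,
        show ((2 * π * k : ℝ) : ℂ) * Complex.I = k * (2 * π * Complex.I) by push_cast; ring,
        Complex.exp_int_mul_two_pi_mul_I, mul_one]⟩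
  intro θ _ hmem
  by_contra! ⟨⟨θ₁, hθ₁, h₁⟩, ⟨θ₂, hθ₂, h₂⟩⟩
  rw [Metric.mem_closedBall, ho'_polar] at hmem h₁ h₂
  have hmin := min_dist_le_dist_add_mul_exp (φ := φ) o (hs.trans hsr) hs hθ₁.2 hθ₂.1
    fun k hk ↦ hφ k ⟨by linarith [hθ₁.1, hk.1], by linarith [hθ₂.2, hk.2]⟩
  exact (lt_min (not_le.mp h₁) (not_le.mp h₂)).not_ge (hmin.trans hmem)

/-- Let `D` be the disk of radius `r` centered at `o`, `D₁` the sector of `D` with apex `o`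
spanned by directions with angle in `[α, α+π/3]`, and `γ₁` its circular boundary arc.
Let `D'` be a disk centered at `o' ∈ D` with `o' ∉ D₁`.  Then `D' ∩ γ₁` is either empty or
a union of at most two subarcs each containing an endpoint of `γ₁`: every point of
`D' ∩ γ₁` is joined to one of the endpoints of `γ₁` by a subarc contained in `D'`.
In particular `D' ∩ γ₁` is never a nonempty arc contained in the relative interior of `γ₁`.
(The plane is modelled by `ℂ`.) -/
theorem stmt_6 (o o' : ℂ) (r r' α : ℝ) (hr : 0 < r)
    (hoD : dist o' o ≤ r)
    (ho' : ¬ ∃ t θ : ℝ, 0 ≤ t ∧ t ≤ r ∧ θ ∈ Set.Icc α (α + π / 3) ∧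
      o' = o + (t : ℂ) * Complex.exp ((θ : ℂ) * Complex.I)) :
    ∀ θ ∈ Set.Icc α (α + π / 3),
      o + (r : ℂ) * Complex.exp ((θ : ℂ) * Complex.I) ∈ Metric.closedBall o' r' →
        (∀ θ' ∈ Set.Icc α θ,
            o + (r : ℂ) * Complex.exp ((θ' : ℂ) * Complex.I) ∈ Metric.closedBall o' r') ∨
          (∀ θ' ∈ Set.Icc θ (α + π / 3),
            o + (r : ℂ) * Complex.exp ((θ' : ℂ) * Complex.I) ∈ Metric.closedBall o' r') :=
  stmt_6_general o o' r r' α hoD ho'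
end

section
/- Let r₀ > r > 0 and let K = e ⊕ D(r) be the Minkowski sum of a segment e with a closed disk of radius r, and let D₀ be a closed disk of radius r₀ centered at c. Write D₀ = D₀* ⊕ D(r) where D₀* is the disk of radius r₀ − r centered at c. If D₀* ∩ e = ∅ then ∂D₀ and ∂K intersect in at most two points. -/
/-
A point `x` of `C = sphere c R` on the frontier of `K = s + closedBall 0 r` has a nearest point
`p ∈ s` with `‖x - p‖ = r`, and every `y` with `⟪x - p, y - x⟫ > 0` lies outside `K`. Moving from
`x` along `C` in a direction where this inner product grows produces points of `C \ K`
arbitrarily close to `x`. In the plane such a direction always exists: if `x - p` is normal to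
`C`, the hypothesis `dist p c > R - r` forces it to point towards `c`, and then both directions
work.

On the other hand `C ∩ K` is connected: for `x, y ∈ C ∩ K` with witnesses `p, q ∈ s`, the radial
projection onto `C` of the polygon `x → p → q → y` stays in `K`, because every point of `[p, q]`
is at distance between `R - r` and `R + r` from `c`. The angle measured from a point of `C \ K`
embeds `C` minus that point continuously into `ℝ`, where `C ∩ K` becomes an interval; the points
of `C ∩ frontier K` cannot lie in its interior, so there are at most two of them.
-/

open Metric Set Filter Topology Pointwise
open scoped RealInnerProductSpace

theorem mem_add_closedBall_zero_iff {E : Type*} [SeminormedAddCommGroup E] {s : Set E} {r : ℝ}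
    {y : E} : y ∈ s + closedBall (0 : E) r ↔ ∃ q ∈ s, dist y q ≤ r := by
  simp only [Set.mem_add, mem_closedBall_zero_iff, dist_eq_norm]
  constructor
  · rintro ⟨q, hq, d, hd, rfl⟩
    exact ⟨q, hq, by simpa using hd⟩
  · rintro ⟨q, hq, h⟩
    exact ⟨q, hq, y - q, h, by abel⟩

section InnerProductSpace

variable {E : Type*} [NormedAddCommGroup E] [InnerProductSpace ℝ E]

theorem exists_nearest_of_mem_frontier_add_closedBall {s : Set E} {r : ℝ} {x : E}
    (hs : IsCompact s) (hsc : Convex ℝ s) (hr : 0 ≤ r)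
    (hx : x ∈ frontier (s + closedBall (0 : E) r)) :
    ∃ p ∈ s, ‖x - p‖ = r ∧ ∀ q ∈ s, ⟪x - p, q - p⟫ ≤ 0 := by
  rw [hs.add_closedBall_zero hr] at hx
  have hne : s.Nonempty := by
    by_contra h
    simp [Set.not_nonempty_iff_eq_empty.mp h] at hx
  obtain ⟨p, hp, hpx⟩ := hs.exists_infDist_eq_dist hne x
  have hinf : infDist x s = r := by
    rw [infDist, frontier_cthickening_subset s hx, ENNReal.toReal_ofReal hr]
  refine ⟨p, hp, by rw [← dist_eq_norm, ← hpx, hinf],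
    (norm_eq_iInf_iff_real_inner_le_zero hsc hp).mp ?_⟩
  simp only [← dist_eq_norm, ← hpx, infDist_eq_iInf]

theorem notMem_add_closedBall_of_inner_pos {s : Set E} {r : ℝ} {x p y : E}
    (hp : ∀ q ∈ s, ⟪x - p, q - p⟫ ≤ 0) (hxp : ‖x - p‖ = r) (hy : 0 < ⟪x - p, y - x⟫) :
    y ∉ s + closedBall (0 : E) r := by
  rw [mem_add_closedBall_zero_iff]
  rintro ⟨q, hq, hyq⟩
  have hsplit : ⟪x - p, y - q⟫ = ⟪x - p, y - x⟫ + ⟪x - p, x - p⟫ - ⟪x - p, q - p⟫ := by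
    rw [← inner_add_right, ← inner_sub_right]; congr 1; abel
  have hcs : ⟪x - p, y - q⟫ ≤ r * r := by
    calc ⟪x - p, y - q⟫ ≤ ‖x - p‖ * ‖y - q‖ := real_inner_le_norm _ _
      _ ≤ r * r := by
        rw [hxp, ← dist_eq_norm]; exact mul_le_mul_of_nonneg_left hyq (hxp ▸ norm_nonneg _)
  rw [real_inner_self_eq_norm_sq, hxp] at hsplit
  linarith [hp q hq]

noncomputable def radialProjection (c : E) (R : ℝ) (z : E) : E :=
  c + (R / ‖z - c‖) • (z - c)

theorem radialProjection_mem_sphere {c z : E} {R : ℝ} (hR : 0 ≤ R) (hz : z ≠ c) :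
    radialProjection c R z ∈ sphere c R := by
  have hN : ‖z - c‖ ≠ 0 := norm_ne_zero_iff.mpr (sub_ne_zero.mpr hz)
  rw [mem_sphere_iff_norm, radialProjection, add_sub_cancel_left, norm_smul, Real.norm_eq_abs,
    abs_div, abs_norm, abs_of_nonneg hR, div_mul_cancel₀ _ hN]

theorem radialProjection_of_mem_sphere {c z : E} {R : ℝ} (hz : z ∈ sphere c R) :
    radialProjection c R z = z := by
  rw [mem_sphere_iff_norm] at hz
  rcases eq_or_ne R 0 with rfl | hR
  · rw [norm_eq_zero, sub_eq_zero] at hz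
    simp [radialProjection, hz]
  · rw [radialProjection, hz, div_self hR, one_smul, add_sub_cancel]

theorem continuousOn_radialProjection (c : E) (R : ℝ) :
    ContinuousOn (radialProjection c R) {c}ᶜ := by
  intro z hz
  have hN : ‖z - c‖ ≠ 0 := norm_ne_zero_iff.mpr (sub_ne_zero.mpr hz)
  unfold radialProjection
  fun_prop (disch := exact hN)

-- The hypothesis is `dist (radialProjection c R z) p ^ 2 ≤ r ^ 2`, multiplied by `‖z - c‖`.
theorem dist_radialProjection_le {c p z : E} {R r : ℝ} (hr : 0 ≤ r) (hz : z ≠ c)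
    (h : (R ^ 2 + ‖p - c‖ ^ 2 - r ^ 2) * ‖z - c‖ ≤ 2 * R * ⟪z - c, p - c⟫) :
    dist (radialProjection c R z) p ≤ r := by
  have hN : 0 < ‖z - c‖ := norm_pos_iff.mpr (sub_ne_zero.mpr hz)
  have hsq : dist (radialProjection c R z) p ^ 2
      = R ^ 2 - 2 * (R / ‖z - c‖) * ⟪z - c, p - c⟫ + ‖p - c‖ ^ 2 := by
    rw [dist_eq_norm, radialProjection, show c + (R / ‖z - c‖) • (z - c) - p
      = (R / ‖z - c‖) • (z - c) - (p - c) by abel, norm_sub_sq_real, real_inner_smul_left,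
      norm_smul, Real.norm_eq_abs, mul_pow, sq_abs, div_pow, div_mul_cancel₀ _ (by positivity)]
    ring
  have hk : R ^ 2 + ‖p - c‖ ^ 2 - r ^ 2 ≤ 2 * (R / ‖z - c‖) * ⟪z - c, p - c⟫ := by
    rw [show 2 * (R / ‖z - c‖) * ⟪z - c, p - c⟫ = 2 * R * ⟪z - c, p - c⟫ / ‖z - c‖ by ring,
      le_div_iff₀ hN]
    exact h
  have hle : dist (radialProjection c R z) p ^ 2 ≤ r ^ 2 := by linarith
  exact pow_le_pow_iff_left₀ dist_nonneg hr two_ne_zero |>.mp hle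

theorem segment_subset_radialProjection_preimage {c x p : E} {R r : ℝ} (hx : x ∈ sphere c R)
    (hxp : dist x p ≤ r) (hrR : r < R) :
    segment ℝ x p ⊆ {z | z ≠ c ∧ dist (radialProjection c R z) p ≤ r} := by
  rw [mem_sphere_iff_norm] at hx
  rw [dist_eq_norm] at hxp
  have hr : 0 ≤ r := (norm_nonneg _).trans hxp
  set k := R ^ 2 + ‖p - c‖ ^ 2 - r ^ 2
  have hexp : ‖x - p‖ ^ 2 = R ^ 2 - 2 * ⟪x - c, p - c⟫ + ‖p - c‖ ^ 2 := by
    rw [← hx, ← norm_sub_sq_real, sub_sub_sub_cancel_right]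
  have hRp : R ≤ r + ‖p - c‖ := hx ▸ (norm_sub_le_norm_sub_add_norm_sub x p c).trans (by linarith)
  have hpR : ‖p - c‖ ≤ r + R := by
    have := norm_sub_le_norm_sub_add_norm_sub p x c
    rw [norm_sub_rev p x] at this
    linarith
  have hxp2 : ‖x - p‖ ^ 2 ≤ r ^ 2 := pow_le_pow_left₀ (norm_nonneg _) hxp 2
  -- The `z` whose radial projection lies in `closedBall p r` form a convex cone with apex `c`.
  have hQ : Convex ℝ {z : E | k * ‖z - c‖ ≤ 2 * R * ⟪z - c, p - c⟫ ∧ 0 < ⟪z - c, p - c⟫} := by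
    intro z₁ h₁ z₂ h₂ a b ha hb hab
    have hlin : a • z₁ + b • z₂ - c = a • (z₁ - c) + b • (z₂ - c) := by
      rw [smul_sub, smul_sub, sub_add_sub_comm, ← add_smul, hab, one_smul]
    have hn : ‖a • (z₁ - c) + b • (z₂ - c)‖ ≤ a * ‖z₁ - c‖ + b * ‖z₂ - c‖ := by
      refine (norm_add_le _ _).trans ?_
      rw [norm_smul, norm_smul, Real.norm_of_nonneg ha, Real.norm_of_nonneg hb]
    have hk : 0 ≤ k := by nlinarith
    simp only [mem_ofPred_eq, hlin, inner_add_left, real_inner_smul_left] at h₁ h₂ ⊢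
    constructor
    · nlinarith [mul_le_mul_of_nonneg_left hn hk]
    · rcases ha.eq_or_lt with rfl | ha'
      · rw [zero_add] at hab; subst hab; linarith
      · nlinarith
  have hxQ : x ∈ {z : E | k * ‖z - c‖ ≤ 2 * R * ⟪z - c, p - c⟫ ∧ 0 < ⟪z - c, p - c⟫} :=
    ⟨by rw [hx]; nlinarith, by nlinarith⟩
  have hpQ : p ∈ {z : E | k * ‖z - c‖ ≤ 2 * R * ⟪z - c, p - c⟫ ∧ 0 < ⟪z - c, p - c⟫} := by
    have hρ : 0 < ‖p - c‖ := by linarith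
    refine ⟨?_, by rw [real_inner_self_eq_norm_sq]; positivity⟩
    rw [real_inner_self_eq_norm_sq]
    nlinarith [mul_nonneg (mul_nonneg hρ.le (by linarith : 0 ≤ r + ‖p - c‖ - R))
      (by linarith : 0 ≤ r + R - ‖p - c‖)]
  intro z hz
  obtain ⟨hzk, hzpos⟩ := hQ.segment_subset hxQ hpQ hz
  have hzc : z ≠ c := by rintro rfl; simp at hzpos
  exact ⟨hzc, dist_radialProjection_le hr hzc hzk⟩

theorem isPreconnected_sphere_inter_add_closedBall {s : Set E} {c : E} {R r : ℝ}
    (hs : Convex ℝ s) (hrR : r < R) (hfar : ∀ p ∈ s, R - r < dist p c) :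
    IsPreconnected (sphere c R ∩ (s + closedBall (0 : E) r)) := by
  refine isPreconnected_of_forall_pair fun x hx y hy => ?_
  set Y := sphere c R ∩ (s + closedBall (0 : E) r)
  have hR : 0 ≤ R := mem_sphere.mp hx.1 ▸ dist_nonneg
  have hend : ∀ x ∈ sphere c R, ∀ p ∈ s, dist x p ≤ r →
      segment ℝ x p ⊆ {z | z ≠ c ∧ radialProjection c R z ∈ Y} := fun x hx p hp hxp z hz =>
    have ⟨hzc, hzp⟩ := segment_subset_radialProjection_preimage hx hxp hrR hz
    ⟨hzc, radialProjection_mem_sphere hR hzc, mem_add_closedBall_zero_iff.mpr ⟨p, hp, hzp⟩⟩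
  have hmid : ∀ z ∈ s, dist z c ≤ R + r → z ≠ c ∧ radialProjection c R z ∈ Y := by
    intro z hz hzR
    have hzR' := hfar z hz
    have hzc : z ≠ c := by rintro rfl; linarith [dist_self z]
    refine ⟨hzc, radialProjection_mem_sphere hR hzc, mem_add_closedBall_zero_iff.mpr
      ⟨z, hz, dist_radialProjection_le (by linarith) hzc ?_⟩⟩
    rw [← dist_eq_norm, real_inner_self_eq_norm_sq, ← dist_eq_norm]
    nlinarith [mul_nonneg (mul_nonneg (dist_nonneg (x := z) (y := c))
      (by linarith : 0 ≤ r + dist z c - R)) (by linarith : 0 ≤ R + r - dist z c)]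
  obtain ⟨p, hp, hxp⟩ := mem_add_closedBall_zero_iff.mp hx.2
  obtain ⟨q, hq, hyq⟩ := mem_add_closedBall_zero_iff.mp hy.2
  have hball : ∀ w ∈ sphere c R, ∀ p', dist w p' ≤ r → p' ∈ closedBall c (R + r) := by
    intro w hw p' hwp
    rw [mem_closedBall]
    linarith [dist_triangle p' w c, mem_sphere.mp hw, dist_comm w p']
  set T := segment ℝ x p ∪ segment ℝ p q ∪ segment ℝ q y
  have hT : T ⊆ {z | z ≠ c ∧ radialProjection c R z ∈ Y} := by
    refine union_subset (union_subset (hend x hx.1 p hp hxp) fun z hz => hmid z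
      (hs.segment_subset hp hq hz) ((convex_closedBall c (R + r)).segment_subset
        (hball x hx.1 p hxp) (hball y hy.1 q hyq) hz)) ?_
    rw [segment_symm]
    exact hend y hy.1 q hq hyq
  have hTconn : IsPreconnected T :=
    (((convex_segment x p).isPreconnected.union p (right_mem_segment ℝ x p)
      (left_mem_segment ℝ p q) (convex_segment p q).isPreconnected).union q
      (Or.inr (right_mem_segment ℝ p q)) (left_mem_segment ℝ q y)
      (convex_segment q y).isPreconnected)
  refine ⟨radialProjection c R '' T, image_subset_iff.mpr fun z hz => (hT hz).2,
    ⟨x, Or.inl (Or.inl (left_mem_segment ℝ x p)), radialProjection_of_mem_sphere hx.1⟩,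
    ⟨y, Or.inr (right_mem_segment ℝ q y), radialProjection_of_mem_sphere hy.1⟩,
    hTconn.image _ ((continuousOn_radialProjection c R).mono fun z hz => (hT hz).1)⟩

-- The rational parametrisation of the circle about `c` through `c + u` (at `t = 0`) with
-- tangent `v` there.
noncomputable def rationalCircle (c u v : E) (t : ℝ) : E :=
  c + (1 + t ^ 2)⁻¹ • ((1 - t ^ 2) • u + (2 * t) • v)

theorem rationalCircle_mem_sphere {c u v : E} (hv : ‖v‖ = ‖u‖) (huv : ⟪u, v⟫ = 0) (t : ℝ) :
    rationalCircle c u v t ∈ sphere c ‖u‖ := by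
  have ht : 0 < 1 + t ^ 2 := by positivity
  rw [mem_sphere_iff_norm, rationalCircle, add_sub_cancel_left,
    ← pow_left_inj₀ (norm_nonneg _) (norm_nonneg _) two_ne_zero, norm_smul, mul_pow,
    norm_add_sq_real, norm_smul, norm_smul, real_inner_smul_left, real_inner_smul_right, huv, hv,
    Real.norm_eq_abs, Real.norm_eq_abs, Real.norm_eq_abs, abs_inv, abs_of_pos ht]
  field_simp
  ring_nf
  rw [sq_abs, sq_abs]
  ring

theorem continuous_rationalCircle (c u v : E) : Continuous (rationalCircle c u v) := by
  unfold rationalCircle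
  fun_prop (disch := intro t; positivity)

theorem rationalCircle_sub (c u v : E) (t : ℝ) :
    rationalCircle c u v t - (c + u) = (2 * t / (1 + t ^ 2)) • (v - t • u) := by
  have ht : 1 + t ^ 2 ≠ 0 := by positivity
  rw [rationalCircle, add_sub_add_left_eq_sub]
  match_scalars <;> field_simp
  ring

theorem mem_closure_sphere_diff_add_closedBall {s : Set E} {r : ℝ} {c x p v : E}
    (hp : ∀ q ∈ s, ⟪x - p, q - p⟫ ≤ 0) (hxp : ‖x - p‖ = r) (hv : ‖v‖ = ‖x - c‖)
    (hxv : ⟪x - c, v⟫ = 0) (hpos : 0 ≤ ⟪x - p, v⟫)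
    (htan : ⟪x - p, v⟫ = 0 → ⟪x - p, x - c⟫ < 0) :
    x ∈ closure (sphere c ‖x - c‖ \ (s + closedBall (0 : E) r)) := by
  have hγ0 : rationalCircle c (x - c) v 0 = x := by simp [rationalCircle]
  have hlim : Tendsto (rationalCircle c (x - c) v) (𝓝[>] 0) (𝓝 x) := by
    have h := ((continuous_rationalCircle c (x - c) v).tendsto 0).mono_left
      (nhdsWithin_le_nhds (s := Ioi 0))
    rwa [hγ0] at h
  have hev : ∀ᶠ t in 𝓝[>] (0 : ℝ), 0 < ⟪x - p, v⟫ - t * ⟪x - p, x - c⟫ := by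
    rcases hpos.lt_or_eq with h | h
    · have hcont : Tendsto (fun t : ℝ => ⟪x - p, v⟫ - t * ⟪x - p, x - c⟫) (𝓝 0)
          (𝓝 ⟪x - p, v⟫) := by
        simpa using ((continuous_id.mul continuous_const).tendsto (0 : ℝ)).const_sub ⟪x - p, v⟫
      exact (hcont.eventually_const_lt h).filter_mono nhdsWithin_le_nhds
    · filter_upwards [self_mem_nhdsWithin] with t (ht : 0 < t)
      nlinarith [htan h.symm]
  refine mem_closure_of_tendsto hlim ?_
  filter_upwards [hev, self_mem_nhdsWithin] with t ht (htpos : 0 < t)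
  refine ⟨rationalCircle_mem_sphere hv hxv t, notMem_add_closedBall_of_inner_pos hp hxp ?_⟩
  have hsub := rationalCircle_sub c (x - c) v t
  rw [add_sub_cancel] at hsub
  rw [hsub, real_inner_smul_right, inner_sub_right, real_inner_smul_right]
  positivity

end InnerProductSpace

theorem Set.InjOn.notMem_interior_image_of_mem_closure_diff {α β : Type*} [TopologicalSpace α]
    [TopologicalSpace β] {f : α → β} {X Y : Set α} {x : α} (hf : InjOn f X) (hYX : Y ⊆ X)
    (hx : x ∈ closure (X \ Y)) (hfx : ContinuousAt f x) : f x ∉ interior (f '' Y) := by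
  rw [← mem_compl_iff, ← closure_compl]
  refine closure_mono ?_ (hfx.continuousWithinAt.mem_closure_image hx)
  rintro _ ⟨y, hy, rfl⟩ ⟨y', hy', hyy'⟩
  exact hy.2 (hf (hYX hy') hy.1 hyy' ▸ hy')

theorem exists_subset_pair_of_injOn_of_not_between {α β : Type*} [Nonempty α] [LinearOrder β]
    {f : α → β} {S : Set α} (hf : InjOn f S)
    (hS : ∀ x ∈ S, ∀ y ∈ S, ∀ z ∈ S, f x < f y → ¬f y < f z) : ∃ p q, S ⊆ {p, q} := by
  by_contra! h
  obtain ⟨x, hx, -⟩ := not_subset.mp (h (Classical.arbitrary α) (Classical.arbitrary α))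
  obtain ⟨y, hy, hyx⟩ := not_subset.mp (h x x)
  obtain ⟨z, hz, hzxy⟩ := not_subset.mp (h x y)
  simp only [mem_insert_iff, mem_singleton_iff, or_self, not_or] at hyx hzxy
  rcases (hf.ne hx hy (Ne.symm hyx)).lt_or_gt with hxy | hyx
  · rcases (hf.ne hy hz (Ne.symm hzxy.2)).lt_or_gt with hyz | hzy
    · exact hS x hx y hy z hz hxy hyz
    rcases (hf.ne hx hz (Ne.symm hzxy.1)).lt_or_gt with hxz | hzx
    · exact hS x hx z hz y hy hxz hzy
    · exact hS z hz x hx y hy hzx hxy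
  · rcases (hf.ne hx hz (Ne.symm hzxy.1)).lt_or_gt with hxz | hzx
    · exact hS y hy x hx z hz hyx hxz
    rcases (hf.ne hy hz (Ne.symm hzxy.2)).lt_or_gt with hyz | hzy
    · exact hS y hy z hz x hx hyz hzx
    · exact hS z hz y hy x hx hzy hyx

section TwoDim

open Module

variable {E : Type*} [NormedAddCommGroup E] [InnerProductSpace ℝ E] [Fact (finrank ℝ E = 2)]

attribute [local instance] FiniteDimensional.of_fact_finrank_eq_two

theorem exists_orthogonal_norm_eq_inner_nonneg (u z : E) :
    ∃ v : E, ‖v‖ = ‖u‖ ∧ ⟪u, v⟫ = 0 ∧ 0 ≤ ⟪z, v⟫ ∧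
      ⟪z, u⟫ ^ 2 + ⟪z, v⟫ ^ 2 = ‖z‖ ^ 2 * ‖u‖ ^ 2 := by
  let o : Orientation ℝ E (Fin 2) := (finBasisOfFinrankEq ℝ E Fact.out).orientation
  have hJ : ⟪u, o.rightAngleRotation u⟫ = 0 := by
    rw [real_inner_comm, o.inner_rightAngleRotation_self]
  have hsq : ⟪z, u⟫ ^ 2 + ⟪z, o.rightAngleRotation u⟫ ^ 2 = ‖z‖ ^ 2 * ‖u‖ ^ 2 := by
    rw [real_inner_comm u z, real_inner_comm (o.rightAngleRotation u) z,
      o.inner_rightAngleRotation_left, o.inner_sq_add_areaForm_sq, mul_comm]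
  rcases le_total 0 ⟪z, o.rightAngleRotation u⟫ with h | h
  · exact ⟨o.rightAngleRotation u, by simp, hJ, h, hsq⟩
  · refine ⟨-o.rightAngleRotation u, by simp, by simp [hJ], by simpa [inner_neg_right] using h, ?_⟩
    rwa [inner_neg_right, neg_sq]

theorem exists_injOn_sphere_continuousAt {c e : E} {R : ℝ} (he : e ∈ sphere c R) :
    ∃ ψ : E → ℝ, InjOn ψ (sphere c R) ∧ ∀ x ∈ sphere c R, x ≠ e → ContinuousAt ψ x := by
  let g : E ≃ₗᵢ[ℝ] ℂ := (Complex.isometryOfOrthonormal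
    ((stdOrthonormalBasis ℝ E).reindex (finCongr Fact.out))).symm
  have hunit : ∀ x ∈ sphere c R, c ≠ e → ‖g (x - c) / g (c - e)‖ = 1 := by
    intro x hx hce
    rw [mem_sphere_iff_norm] at hx he
    rw [norm_div, g.norm_map, g.norm_map, hx, norm_sub_rev, he,
      div_self (he ▸ norm_ne_zero_iff.mpr (sub_ne_zero.mpr hce.symm))]
  have hcenter : ∀ x ∈ sphere c R, c = e → x = e := by
    rintro x hx rfl
    rw [mem_sphere_iff_norm] at hx he
    rwa [sub_self, norm_zero, ← hx, eq_comm, norm_eq_zero, sub_eq_zero] at he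
  have hge : ∀ {c e : E}, c ≠ e → g (c - e) ≠ 0 := fun h =>
    g.map_ne_zero_iff.mpr (sub_ne_zero.mpr h)
  refine ⟨fun x => Complex.arg (g (x - c) / g (c - e)), fun x hx y hy hxy => ?_,
    fun x hx hxe => ?_⟩
  · by_cases hce : c = e
    · rw [hcenter x hx hce, hcenter y hy hce]
    have := Complex.ext_norm_arg ((hunit x hx hce).trans (hunit y hy hce).symm) hxy
    rw [div_left_inj' (hge hce), g.map_eq_iff, sub_left_inj] at this
    exact this
  · have hce : c ≠ e := fun h => hxe (hcenter x hx h)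
    have hslit : g (x - c) / g (c - e) ∈ Complex.slitPlane := by
      have hsph : ({g (x - c) / g (c - e)} : Set ℂ) ⊆ sphere 0 1 := by
        simpa using hunit x hx hce
      refine singleton_subset_iff.mp ((Complex.subset_slitPlane_iff_of_subset_sphere hsph).mpr ?_)
      rw [mem_singleton_iff, eq_comm, div_eq_iff (hge hce), Complex.ofReal_one, neg_one_mul,
        ← map_neg, neg_sub, g.map_eq_iff, sub_left_inj]
      exact hxe
    exact (Complex.continuousAt_arg hslit).comp (f := fun x => g (x - c) / g (c - e))
      (by fun_prop (disch := exact hge hce))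

theorem mem_closure_sphere_diff_of_mem_frontier {s : Set E} {c x : E} {R r : ℝ}
    (hs : IsCompact s) (hsc : Convex ℝ s) (hr : 0 < r) (hrR : r < R)
    (hfar : ∀ p ∈ s, R - r < dist p c) (hx : x ∈ sphere c R)
    (hxK : x ∈ frontier (s + closedBall (0 : E) r)) :
    x ∈ closure (sphere c R \ (s + closedBall (0 : E) r)) := by
  obtain ⟨p, hp, hxp, hobt⟩ := exists_nearest_of_mem_frontier_add_closedBall hs hsc hr.le hxK
  obtain ⟨v, hv, hxv, hpos, hsq⟩ := exists_orthogonal_norm_eq_inner_nonneg (x - c) (x - p)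
  rw [mem_sphere_iff_norm] at hx
  rw [← hx]
  refine mem_closure_sphere_diff_add_closedBall hobt hxp hv hxv hpos fun h0 => ?_
  have hpc : ‖p - c‖ ^ 2 = R ^ 2 - 2 * ⟪x - p, x - c⟫ + r ^ 2 := by
    rw [← hx, ← hxp, real_inner_comm, ← norm_sub_sq_real, sub_sub_sub_cancel_left]
  have hfar' : (R - r) ^ 2 < ‖p - c‖ ^ 2 := by
    have := hfar p hp
    rw [dist_eq_norm] at this
    nlinarith
  rw [h0, hxp, hx] at hsq
  nlinarith [mul_pos hr (hr.trans hrR)]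

theorem exists_frontier_closedBall_inter_frontier_add_closedBall_subset_pair {s : Set E} {c : E}
    {R r : ℝ} (hs : IsCompact s) (hsc : Convex ℝ s) (hr : 0 < r) (hrR : r < R)
    (hdisj : Disjoint s (closedBall c (R - r))) :
    ∃ p q : E, frontier (closedBall c R) ∩ frontier (s + closedBall (0 : E) r) ⊆ {p, q} := by
  have hfar : ∀ p ∈ s, R - r < dist p c := fun p hp =>
    not_le.mp fun h => disjoint_left.mp hdisj hp (mem_closedBall.mpr h)
  set K := s + closedBall (0 : E) r
  have hK : frontier K ⊆ K := (hs.add (isCompact_closedBall 0 r)).isClosed.frontier_subset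
  rw [frontier_closedBall c (hr.trans hrR).ne']
  have hexit : ∀ x ∈ sphere c R ∩ frontier K, x ∈ closure (sphere c R \ K) := fun x hx =>
    mem_closure_sphere_diff_of_mem_frontier hs hsc hr hrR hfar hx.1 hx.2
  rcases (sphere c R ∩ frontier K).eq_empty_or_nonempty with hS | ⟨x₀, hx₀⟩
  · exact ⟨c, c, hS ▸ empty_subset _⟩
  obtain ⟨e, he⟩ := closure_nonempty_iff.mp ⟨x₀, hexit x₀ hx₀⟩
  have hne : ∀ y ∈ K, y ≠ e := fun y hy hye => he.2 (hye ▸ hy)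
  obtain ⟨ψ, hψ, hψc⟩ := exists_injOn_sphere_continuousAt he.1
  have hI : IsPreconnected (ψ '' (sphere c R ∩ K)) :=
    (isPreconnected_sphere_inter_add_closedBall hsc hrR hfar).image ψ fun y hy =>
      (hψc y hy.1 (hne y hy.2)).continuousWithinAt
  refine exists_subset_pair_of_injOn_of_not_between (hψ.mono inter_subset_left)
    fun x hx y hy z hz hxy hyz => hψ.notMem_interior_image_of_mem_closure_diff inter_subset_left
      (by rw [sdiff_self_inter]; exact hexit y hy) (hψc y hy.1 (hne y (hK hy.2))) ?_
  refine (isOpen_Ioo.subset_interior_iff.mpr (Ioo_subset_Icc_self.trans (hI.Icc_subset ?_ ?_)))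
    ⟨hxy, hyz⟩
  · exact mem_image_of_mem ψ ⟨hx.1, hK hx.2⟩
  · exact mem_image_of_mem ψ ⟨hz.1, hK hz.2⟩

end TwoDim

/-- Pseudo-disk property of a disk and a racetrack: let `K = e ⊕ D(r)` be the Minkowski sum
of a segment `e` with the closed disk of radius `r`, and `D₀` the closed disk of radius
`r₀ > r` centered at `c`, so `D₀ = D₀* ⊕ D(r)` with `D₀*` the disk of radius `r₀ - r` at `c`.
If `D₀* ∩ e = ∅`, then `∂D₀ ∩ ∂K` consists of at most two points. -/
theorem stmt_10 (a b c : EuclideanSpace ℝ (Fin 2)) (r r₀ : ℝ) (hr : 0 < r) (hrr : r < r₀)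
    (hdisj : Disjoint (segment ℝ a b) (Metric.closedBall c (r₀ - r))) :
    ∃ p q : EuclideanSpace ℝ (Fin 2),
      frontier (Metric.closedBall c r₀) ∩
          frontier (segment ℝ a b + Metric.closedBall (0 : EuclideanSpace ℝ (Fin 2)) r) ⊆
        {p, q} := by
  have : Fact (Module.finrank ℝ (EuclideanSpace ℝ (Fin 2)) = 2) := ⟨finrank_euclideanSpace_fin⟩
  refine exists_frontier_closedBall_inter_frontier_add_closedBall_subset_pair ?_
    (convex_segment a b) hr hrr hdisj
  rw [← convexHull_pair]
  exact (toFinite _).isCompact_convexHull ℝ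
end

section
/- Let ω: X → [0,1] and ω̃: X → [0,1] be two functions on a set X, let ρ > 0, ε = δ/4 with δ ∈ (0,1), and suppose for all q ∈ X: |ω(q) − ω̃(q)| ≤ ε·ω(q) if ω(q) ≥ ρ, and |ω(q) − ω̃(q)| ≤ ε·ρ if ω(q) < ρ. Let q* maximize ω and q̃ maximize ω̃, and assume ω(q*) ≥ ρ. Then ω(q̃) ≥ (1 − δ/2)·ω(q*). -/
/-!
Both bounds start from `ω'(q̃) ≥ ω'(q*) ≥ (1 - ε) ω(q*)`. If `ω(q̃) ≥ ρ`, the relative error bound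
`ω'(q̃) ≤ (1 + ε) ω(q̃)` gives `ω(q̃) ≥ (1 - ε)/(1 + ε) · ω(q*) ≥ (1 - 2ε) ω(q*)`. If `ω(q̃) < ρ`,
the absolute error bound gives `ω(q̃) ≥ (1 - ε) ω(q*) - ερ`, and `ρ ≤ ω(q*)` absorbs the loss `ερ`.
-/

/-- The paper's `(ρ, ε)`-approximation. -/
def IsThresholdApprox {X : Type*} (ρ ε : ℝ) (ω ω' : X → ℝ) : Prop :=
  ∀ q, (ρ ≤ ω q → |ω q - ω' q| ≤ ε * ω q) ∧ (ω q < ρ → |ω q - ω' q| ≤ ε * ρ)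

namespace IsThresholdApprox

variable {X : Type*} {ρ ε : ℝ} {ω ω' : X → ℝ} {q : X}

theorem mul_nonneg_of_le (h : IsThresholdApprox ρ ε ω ω') (hq : ρ ≤ ω q) : 0 ≤ ε * ω q :=
  (abs_nonneg _).trans ((h q).1 hq)

theorem one_sub_mul_le (h : IsThresholdApprox ρ ε ω ω') (hq : ρ ≤ ω q) :
    (1 - ε) * ω q ≤ ω' q := by
  have := abs_le.mp ((h q).1 hq)
  linarith

theorem le_one_add_mul (h : IsThresholdApprox ρ ε ω ω') (hq : ρ ≤ ω q) :
    ω' q ≤ (1 + ε) * ω q := by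
  have := abs_le.mp ((h q).1 hq)
  linarith

theorem le_add_mul (h : IsThresholdApprox ρ ε ω ω') (hq : ω q < ρ) :
    ω' q ≤ ω q + ε * ρ := by
  have := abs_le.mp ((h q).2 hq)
  linarith

theorem one_sub_two_mul_le_of_forall_le (h : IsThresholdApprox ρ ε ω ω') (hε : 0 ≤ ε)
    {qs qt : X} (hqt : ∀ q, ω' q ≤ ω' qt) (hρs : ρ ≤ ω qs) :
    (1 - 2 * ε) * ω qs ≤ ω qt := by
  have hs : (1 - ε) * ω qs ≤ ω' qt := (h.one_sub_mul_le hρs).trans (hqt qs)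
  rcases le_or_gt ρ (ω qt) with ht | ht
  · refine le_of_mul_le_mul_left ?_ (by linarith : 0 < 1 + ε)
    calc (1 + ε) * ((1 - 2 * ε) * ω qs)
        = (1 - ε) * ω qs - 2 * ε * (ε * ω qs) := by ring
      _ ≤ (1 - ε) * ω qs := by nlinarith [h.mul_nonneg_of_le hρs]
      _ ≤ (1 + ε) * ω qt := hs.trans (h.le_one_add_mul ht)
  · calc (1 - 2 * ε) * ω qs
        = (1 - ε) * ω qs - ε * ω qs := by ring
      _ ≤ ω' qt - ε * ρ := by gcongr
      _ ≤ ω qt := by linarith [h.le_add_mul ht]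

end IsThresholdApprox

theorem stmt_16_general (X : Type*) (ω ω' : X → ℝ) (ρ δ : ℝ)
    (hδ0 : 0 < δ)
    (happrox : ∀ q, (ρ ≤ ω q → |ω q - ω' q| ≤ (δ / 4) * ω q) ∧
      (ω q < ρ → |ω q - ω' q| ≤ (δ / 4) * ρ))
    (qs qt : X) (hqt : ∀ q, ω' q ≤ ω' qt)
    (hρs : ρ ≤ ω qs) :
    (1 - δ / 2) * ω qs ≤ ω qt := by
  have key := IsThresholdApprox.one_sub_two_mul_le_of_forall_le happrox (by positivity) hqt hρs
  rwa [show 1 - 2 * (δ / 4) = 1 - δ / 2 by ring] at key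

/-- Correctness of the depth-approximation step: if `ω'` is a `(ρ, δ/4)`-approximation of
`ω`, `q*` maximizes `ω`, `q̃` maximizes `ω'`, and `ω(q*) ≥ ρ`, then
`ω(q̃) ≥ (1 − δ/2)·ω(q*)`. -/
theorem stmt_16 (X : Type*) (ω ω' : X → ℝ) (ρ δ : ℝ) (hρ : 0 < ρ)
    (hδ0 : 0 < δ) (hδ1 : δ < 1)
    (hr : ∀ q, ω q ∈ Set.Icc (0 : ℝ) 1) (hr' : ∀ q, ω' q ∈ Set.Icc (0 : ℝ) 1)
    (happrox : ∀ q, (ρ ≤ ω q → |ω q - ω' q| ≤ (δ / 4) * ω q) ∧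
      (ω q < ρ → |ω q - ω' q| ≤ (δ / 4) * ρ))
    (qs qt : X) (hqs : ∀ q, ω q ≤ ω qs) (hqt : ∀ q, ω' q ≤ ω' qt)
    (hρs : ρ ≤ ω qs) :
    (1 - δ / 2) * ω qs ≤ ω qt :=
  stmt_16_general X ω ω' ρ δ hδ0 happrox qs qt hqt hρs
end
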